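/- Let A_i > 0 for i = 1,…,M, H > 0, p ∈ ℝ², w₀ ∈ ℝ². Define F_lb(w) = Σ_{i=1}^M exp( -[A_i/(‖w₀-p‖²+H²) - A_i/(‖w₀-p‖²+H²)² · (‖w-p‖² - ‖w₀-p‖²)] ). Then F_lb is convex on ℝ², and F_lb(w) ≥ Σ_{i=1}^M exp(-A_i/(‖w-p‖²+H²)) for all w, with equality at w = w₀. -/

import Mathlib

open Real Set

/-!
Each summand of `F_lb` is `exp` of `A_i / c² · ‖w - p‖²` plus a constant, where
`c = ‖w₀ - p‖² + H²`; with `A_i / c² ≥ 0` this is convex because the squared distance is convex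
and `exp` is convex and increasing. The exponent of `F_lb` is minus the tangent line at `c` of
the convex function `t ↦ A_i / t`, evaluated at `t = ‖w - p‖² + H²`; it therefore lies below
`-A_i / t`, and `exp` turns this into the majorization, with equality at the tangency point.
-/

theorem convexOn_finset_sum {𝕜 E β ι : Type*} [Semiring 𝕜] [PartialOrder 𝕜] [AddCommMonoid E]
    [AddCommMonoid β] [PartialOrder β] [IsOrderedAddMonoid β] [SMul 𝕜 E] [Module 𝕜 β]
    {s : Set E} (hs : Convex 𝕜 s) (t : Finset ι) {f : ι → E → β}
    (hf : ∀ i ∈ t, ConvexOn 𝕜 s (f i)) : ConvexOn 𝕜 s fun x => ∑ i ∈ t, f i x := by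
  classical
  induction t using Finset.induction_on with
  | empty => simpa using convexOn_const (0 : β) hs
  | insert i t hi ih =>
    simp only [Finset.sum_insert hi]
    exact (hf i (Finset.mem_insert_self i t)).add
      (ih fun j hj => hf j (Finset.mem_insert_of_mem hj))

theorem ConvexOn.exp {E : Type*} [AddCommMonoid E] [Module ℝ E] {s : Set E} {f : E → ℝ}
    (hf : ConvexOn ℝ s f) : ConvexOn ℝ s fun x => Real.exp (f x) := by
  refine ⟨hf.1, fun x hx y hy a b ha hb hab => ?_⟩
  calc Real.exp (f (a • x + b • y)) ≤ Real.exp (a * f x + b * f y) :=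
        Real.exp_le_exp.2 (hf.2 hx hy ha hb hab)
    _ ≤ a * Real.exp (f x) + b * Real.exp (f y) :=
        convexOn_exp.2 (mem_univ (f x)) (mem_univ (f y)) ha hb hab

theorem convexOn_univ_norm_sub_sq {E : Type*} [SeminormedAddCommGroup E] [NormedSpace ℝ E]
    (p : E) : ConvexOn ℝ univ fun w => ‖w - p‖ ^ 2 := by
  simpa only [dist_eq_norm, Pi.pow_def] using
    (convexOn_univ_dist p).pow (fun _ _ => dist_nonneg) 2

theorem convexOn_univ_exp_mul_norm_sub_sq_add {E : Type*} [SeminormedAddCommGroup E]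
    [NormedSpace ℝ E] (p : E) {k : ℝ} (hk : 0 ≤ k) (b : ℝ) :
    ConvexOn ℝ univ fun w => Real.exp (k * ‖w - p‖ ^ 2 + b) :=
  (((convexOn_univ_norm_sub_sq p).smul hk).add_const b).exp

theorem div_sub_div_sq_mul_sub_le_div {A c t : ℝ} (hA : 0 ≤ A) (hc : 0 < c) (ht : 0 < t) :
    A / c - A / c ^ 2 * (t - c) ≤ A / t := by
  have hgap : A / t - (A / c - A / c ^ 2 * (t - c)) = A * (t - c) ^ 2 / (c ^ 2 * t) := by
    field_simp
    ring
  have : 0 ≤ A * (t - c) ^ 2 / (c ^ 2 * t) := by positivity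
  linarith

theorem stmt_4 (M : ℕ) (A : Fin M → ℝ) (hA : ∀ i, 0 < A i) (H : ℝ) (hH : 0 < H)
    (p w₀ : EuclideanSpace ℝ (Fin 2))
    (Flb : EuclideanSpace ℝ (Fin 2) → ℝ)
    (hFlb : ∀ w, Flb w = ∑ i, Real.exp (-(A i / (‖w₀ - p‖ ^ 2 + H ^ 2) -
        A i / (‖w₀ - p‖ ^ 2 + H ^ 2) ^ 2 * (‖w - p‖ ^ 2 - ‖w₀ - p‖ ^ 2)))) :
    ConvexOn ℝ Set.univ Flb ∧
      (∀ w, Flb w ≥ ∑ i, Real.exp (-(A i / (‖w - p‖ ^ 2 + H ^ 2)))) ∧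
      Flb w₀ = ∑ i, Real.exp (-(A i / (‖w₀ - p‖ ^ 2 + H ^ 2))) := by
  set c := ‖w₀ - p‖ ^ 2 + H ^ 2
  refine ⟨?convex, fun w => ?majorizes, ?touches⟩
  case convex =>
    have hFlb' : Flb = fun w => ∑ i, Real.exp
        (A i / c ^ 2 * ‖w - p‖ ^ 2 + (-(A i / c ^ 2 * ‖w₀ - p‖ ^ 2) - A i / c)) := by
      funext w
      rw [hFlb w]
      exact Finset.sum_congr rfl fun i _ => by congr 1; ring
    rw [hFlb']
    exact convexOn_finset_sum convex_univ _ fun i _ =>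
      convexOn_univ_exp_mul_norm_sub_sq_add p (div_nonneg (hA i).le (sq_nonneg c)) _
  case majorizes =>
    rw [hFlb w, ge_iff_le]
    refine Finset.sum_le_sum fun i _ => Real.exp_le_exp.2 (neg_le_neg ?_)
    have hshift : ‖w - p‖ ^ 2 - ‖w₀ - p‖ ^ 2 = (‖w - p‖ ^ 2 + H ^ 2) - c := by
      simp only [c]
      ring
    rw [hshift]
    exact div_sub_div_sq_mul_sub_le_div (hA i).le (by positivity) (by positivity)
  case touches =>
    simp only [hFlb w₀, sub_self, mul_zero, sub_zero]
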